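/- arXiv:1502.06254 — 5 statements merged into one kernel-verified Lean document; each statement's English description precedes it below -/
import Mathlib

section
/- Let λ = (λ₀, λ₁) be a binary loss function that is proper and η-mixable for some η > 0, with λ₀ and λ₁ continuous on [0,1] (as maps into [0,∞]). Then for every λ-superprediction (a, b) and every p ∈ (0,1), one has (1−p)·e^{−η(a−λ₀(p))} + p·e^{−η(b−λ₁(p))} ≤ 1; equivalently, the point (ηa − ln(1−p) − ηλ₀(p), ηb − ln p − ηλ₁(p)) is a superprediction for the log loss function. -/
open Set

/-- `e^{-c}` for `c ∈ [0,∞]`, with the convention `e^{-∞} = 0`. -/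
noncomputable def expNeg (c : ENNReal) : ℝ :=
  if c = ⊤ then 0 else Real.exp (-c.toReal)

/-- `(l0, l1)` is a binary loss function: `l0 0 = 0`, `l1 1 = 0`, `l0` is increasing,
`l1` is decreasing, and both are finite on `(0,1)`. -/
structure IsLossFunction (l0 l1 : ℝ → ENNReal) : Prop where
  zero0 : l0 0 = 0
  zero1 : l1 1 = 0
  mono0 : MonotoneOn l0 (Icc 0 1)
  anti1 : AntitoneOn l1 (Icc 0 1)
  finite0 : ∀ p ∈ Ioo (0:ℝ) 1, l0 p ≠ ⊤
  finite1 : ∀ p ∈ Ioo (0:ℝ) 1, l1 p ≠ ⊤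

/-- `(l0, l1)` is proper: predicting `p` is optimal in expectation when the label has
probability `p` of being `1`. -/
def IsProper (l0 l1 : ℝ → ENNReal) : Prop :=
  ∀ p ∈ Icc (0:ℝ) 1, ∀ q ∈ Icc (0:ℝ) 1,
    ENNReal.ofReal p * l1 p + ENNReal.ofReal (1 - p) * l0 p ≤
      ENNReal.ofReal p * l1 q + ENNReal.ofReal (1 - p) * l0 q

/-- `(l0, l1)` is `η`-mixable: the image of the superprediction set under
`(x, y) ↦ (e^{-ηx}, e^{-ηy})` is convex. -/
def IsMixable (l0 l1 : ℝ → ENNReal) (η : ℝ) : Prop :=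
  Convex ℝ {x : ℝ × ℝ | x.1 ∈ Icc (0:ℝ) 1 ∧ x.2 ∈ Icc (0:ℝ) 1 ∧
    ∃ p ∈ Icc (0:ℝ) 1,
      x.1 ≤ expNeg (ENNReal.ofReal η * l0 p) ∧ x.2 ≤ expNeg (ENNReal.ofReal η * l1 p)}

/-- `(a, b)` is a superprediction for the loss function `(l0, l1)`. -/
def IsSuperprediction (l0 l1 : ℝ → ENNReal) (a b : ENNReal) : Prop :=
  ∃ q ∈ Icc (0:ℝ) 1, l0 q ≤ a ∧ l1 q ≤ b

open Real Filter Topology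

/-!
Mixability says that the set `S` of exponentiated superpredictions `(e^{-ηx}, e^{-ηy})` is
convex. Properness says that `e^{-ηλ(p)} = (u₀, v₀)` maximizes
`x ↦ (1 - p) ln x₁ + p ln x₂` over `S`, since this function is bounded on `S` by `-η` times the
expected loss of some prediction. At a maximizer over a convex set the derivative is nonpositive
in every direction pointing into the set; in the direction of `(e^{-ηa}, e^{-ηb}) ∈ S` it equals
`(1 - p) (e^{-ηa} / u₀ - 1) + p (e^{-ηb} / v₀ - 1)`.
-/

lemma expNeg_nonneg (c : ENNReal) : 0 ≤ expNeg c := by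
  unfold expNeg; split_ifs <;> positivity

lemma expNeg_le_one (c : ENNReal) : expNeg c ≤ 1 := by
  unfold expNeg; split_ifs
  · exact zero_le_one
  · exact exp_le_one_iff.mpr (neg_nonpos.mpr ENNReal.toReal_nonneg)

lemma expNeg_of_ne_top {c : ENNReal} (hc : c ≠ ⊤) : expNeg c = exp (-c.toReal) :=
  if_neg hc

lemma expNeg_pos_iff {c : ENNReal} : 0 < expNeg c ↔ c ≠ ⊤ := by
  unfold expNeg; split_ifs with hc <;> simp [hc, exp_pos]

lemma expNeg_antitone : Antitone expNeg := by
  intro c d h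
  by_cases hd : d = ⊤
  · rw [hd, expNeg, if_pos rfl]; exact expNeg_nonneg c
  rw [expNeg_of_ne_top hd, expNeg_of_ne_top (ne_top_of_le_ne_top hd h)]
  exact exp_le_exp.mpr (neg_le_neg (ENNReal.toReal_mono hd h))

lemma expNeg_ofReal_mul {η : ℝ} (hη : 0 ≤ η) {c : ENNReal} (hc : c ≠ ⊤) :
    expNeg (ENNReal.ofReal η * c) = exp (-(η * c.toReal)) := by
  rw [expNeg_of_ne_top (ENNReal.mul_ne_top ENNReal.ofReal_ne_top hc), ENNReal.toReal_mul,
    ENNReal.toReal_ofReal hη]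

lemma ne_top_and_log_le_of_le_expNeg {η : ℝ} (hη : 0 < η) {c : ENNReal} {x : ℝ} (hx : 0 < x)
    (h : x ≤ expNeg (ENNReal.ofReal η * c)) : c ≠ ⊤ ∧ log x ≤ -(η * c.toReal) := by
  have hc : c ≠ ⊤ := by
    rintro rfl
    rw [ENNReal.mul_top (ENNReal.ofReal_pos.mpr hη).ne'] at h
    exact (hx.trans_le h).ne' (if_pos rfl)
  refine ⟨hc, ?_⟩
  rw [expNeg_ofReal_mul hη.le hc] at h
  simpa using log_le_log hx h

lemma hasFDerivAt_weightedLog (p : ℝ) {x : ℝ × ℝ} (hx1 : x.1 ≠ 0) (hx2 : x.2 ≠ 0) :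
    HasFDerivAt (fun y : ℝ × ℝ => (1 - p) * log y.1 + p * log y.2)
      ((1 - p) • x.1⁻¹ • ContinuousLinearMap.fst ℝ ℝ ℝ +
        p • x.2⁻¹ • ContinuousLinearMap.snd ℝ ℝ ℝ) x :=
  ((hasFDerivAt_fst.log hx1).const_mul (1 - p)).add ((hasFDerivAt_snd.log hx2).const_mul p)

def expSuperpredictionSet (l0 l1 : ℝ → ENNReal) (η : ℝ) : Set (ℝ × ℝ) :=
  {x : ℝ × ℝ | x.1 ∈ Icc (0:ℝ) 1 ∧ x.2 ∈ Icc (0:ℝ) 1 ∧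
    ∃ p ∈ Icc (0:ℝ) 1,
      x.1 ≤ expNeg (ENNReal.ofReal η * l0 p) ∧ x.2 ≤ expNeg (ENNReal.ofReal η * l1 p)}

section

variable {l0 l1 : ℝ → ENNReal} {η : ℝ}

lemma IsMixable.convex (hmix : IsMixable l0 l1 η) : Convex ℝ (expSuperpredictionSet l0 l1 η) :=
  hmix

lemma IsSuperprediction.expNeg_mem {a b : ENNReal} (hab : IsSuperprediction l0 l1 a b) :
    (expNeg (ENNReal.ofReal η * a), expNeg (ENNReal.ofReal η * b)) ∈
      expSuperpredictionSet l0 l1 η := by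
  obtain ⟨q, hq, hqa, hqb⟩ := hab
  exact ⟨⟨expNeg_nonneg _, expNeg_le_one _⟩, ⟨expNeg_nonneg _, expNeg_le_one _⟩, q, hq,
    expNeg_antitone (by gcongr), expNeg_antitone (by gcongr)⟩

lemma IsProper.toReal_le (hproper : IsProper l0 l1) {p r : ℝ} (hp : p ∈ Icc (0:ℝ) 1)
    (hr : r ∈ Icc (0:ℝ) 1) (hp0 : l0 p ≠ ⊤) (hp1 : l1 p ≠ ⊤) (hr0 : l0 r ≠ ⊤)
    (hr1 : l1 r ≠ ⊤) :
    (1 - p) * (l0 p).toReal + p * (l1 p).toReal ≤ (1 - p) * (l0 r).toReal + p * (l1 r).toReal := by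
  have h := ENNReal.toReal_mono (by finiteness) (hproper p hp r hr)
  rw [ENNReal.toReal_add (by finiteness) (by finiteness),
    ENNReal.toReal_add (by finiteness) (by finiteness)] at h
  simp only [ENNReal.toReal_mul, ENNReal.toReal_ofReal hp.1,
    ENNReal.toReal_ofReal (sub_nonneg.mpr hp.2)] at h
  linarith

lemma IsProper.weightedLog_le (hproper : IsProper l0 l1) (hη : 0 < η) {p : ℝ}
    (hp : p ∈ Icc (0:ℝ) 1) (hp0 : l0 p ≠ ⊤) (hp1 : l1 p ≠ ⊤) {x : ℝ × ℝ}
    (hx : x ∈ expSuperpredictionSet l0 l1 η) (hx1 : 0 < x.1) (hx2 : 0 < x.2) :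
    (1 - p) * log x.1 + p * log x.2 ≤ -(η * ((1 - p) * (l0 p).toReal + p * (l1 p).toReal)) := by
  obtain ⟨-, -, r, hr, hxr0, hxr1⟩ := hx
  obtain ⟨hr0, hlog0⟩ := ne_top_and_log_le_of_le_expNeg hη hx1 hxr0
  obtain ⟨hr1, hlog1⟩ := ne_top_and_log_le_of_le_expNeg hη hx2 hxr1
  have h1p : 0 ≤ 1 - p := sub_nonneg.mpr hp.2
  calc (1 - p) * log x.1 + p * log x.2
      ≤ (1 - p) * -(η * (l0 r).toReal) + p * -(η * (l1 r).toReal) := by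
        gcongr
        exact hp.1
    _ = -(η * ((1 - p) * (l0 r).toReal + p * (l1 r).toReal)) := by ring
    _ ≤ -(η * ((1 - p) * (l0 p).toReal + p * (l1 p).toReal)) :=
        neg_le_neg (mul_le_mul_of_nonneg_left (hproper.toReal_le hp hr hp0 hp1 hr0 hr1) hη.le)

lemma IsProper.isLocalMaxOn_weightedLog (hproper : IsProper l0 l1) (hη : 0 < η) {p : ℝ}
    (hp : p ∈ Icc (0:ℝ) 1) (hp0 : l0 p ≠ ⊤) (hp1 : l1 p ≠ ⊤) :
    IsLocalMaxOn (fun x : ℝ × ℝ => (1 - p) * log x.1 + p * log x.2)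
      (expSuperpredictionSet l0 l1 η)
      (expNeg (ENNReal.ofReal η * l0 p), expNeg (ENNReal.ofReal η * l1 p)) := by
  have hpos : ∀ᶠ x : ℝ × ℝ in 𝓝 (expNeg (ENNReal.ofReal η * l0 p),
      expNeg (ENNReal.ofReal η * l1 p)), 0 < x.1 ∧ 0 < x.2 :=
    (isOpen_lt continuous_const continuous_fst).inter (isOpen_lt continuous_const continuous_snd)
      |>.mem_nhds ⟨expNeg_pos_iff.mpr (by finiteness), expNeg_pos_iff.mpr (by finiteness)⟩
  filter_upwards [self_mem_nhdsWithin, nhdsWithin_le_nhds hpos] with x hx ⟨hx1, hx2⟩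
  simp only [expNeg_ofReal_mul hη.le hp0, expNeg_ofReal_mul hη.le hp1, log_exp]
  linarith [hproper.weightedLog_le hη hp hp0 hp1 hx hx1 hx2]

end

theorem log_superprediction_of_mixable_general (l0 l1 : ℝ → ENNReal) (η : ℝ) (hη : 0 < η)
    (hloss : IsLossFunction l0 l1) (hproper : IsProper l0 l1) (hmix : IsMixable l0 l1 η)
    (a b : ENNReal) (hab : IsSuperprediction l0 l1 a b)
    (p : ℝ) (hp : p ∈ Ioo (0:ℝ) 1) :
    (1 - p) * (expNeg (ENNReal.ofReal η * a) * Real.exp (η * (l0 p).toReal)) +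
      p * (expNeg (ENNReal.ofReal η * b) * Real.exp (η * (l1 p).toReal)) ≤ 1 := by
  have hpI : p ∈ Icc (0:ℝ) 1 := Ioo_subset_Icc_self hp
  have hp0 := hloss.finite0 p hp
  have hp1 := hloss.finite1 p hp
  have hP : (expNeg (ENNReal.ofReal η * l0 p), expNeg (ENNReal.ofReal η * l1 p)) ∈
      expSuperpredictionSet l0 l1 η :=
    IsSuperprediction.expNeg_mem ⟨p, hpI, le_rfl, le_rfl⟩
  have hderiv := (hproper.isLocalMaxOn_weightedLog hη hpI hp0 hp1).hasFDerivWithinAt_nonpos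
    (hasFDerivAt_weightedLog p (expNeg_pos_iff.mpr (by finiteness)).ne'
      (expNeg_pos_iff.mpr (by finiteness)).ne').hasFDerivWithinAt
    (sub_mem_posTangentConeAt_of_segment_subset (hmix.convex.segment_subset hP hab.expNeg_mem))
  simp only [expNeg_ofReal_mul hη.le hp0, expNeg_ofReal_mul hη.le hp1, exp_neg, inv_inv,
    Prod.mk_sub_mk, add_apply, smul_apply,
    ContinuousLinearMap.coe_fst', ContinuousLinearMap.coe_snd', smul_eq_mul, mul_sub,
    mul_inv_cancel₀ (exp_ne_zero _)] at hderiv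
  linear_combination hderiv

/-- If `(l0, l1)` is a proper `η`-mixable binary loss function, continuous on `[0,1]`,
then for every superprediction `(a, b)` and every `p ∈ (0,1)`,
`(1-p)·e^{-η(a - l0(p))} + p·e^{-η(b - l1(p))} ≤ 1`. -/
theorem log_superprediction_of_mixable (l0 l1 : ℝ → ENNReal) (η : ℝ) (hη : 0 < η)
    (hloss : IsLossFunction l0 l1) (hproper : IsProper l0 l1) (hmix : IsMixable l0 l1 η)
    (hcont0 : ContinuousOn l0 (Icc 0 1)) (hcont1 : ContinuousOn l1 (Icc 0 1))
    (a b : ENNReal) (hab : IsSuperprediction l0 l1 a b)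
    (p : ℝ) (hp : p ∈ Ioo (0:ℝ) 1) :
    (1 - p) * (expNeg (ENNReal.ofReal η * a) * Real.exp (η * (l0 p).toReal)) +
      p * (expNeg (ENNReal.ofReal η * b) * Real.exp (η * (l1 p).toReal)) ≤ 1 :=
  log_superprediction_of_mixable_general l0 l1 η hη hloss hproper hmix a b hab p hp
end

section
/- Let λ₀, λ₁ : (0,1) → ℝ be twice differentiable functions with λ₀′(p) > 0 for all p ∈ (0,1) and satisfying p·λ₁′(p) + (1−p)·λ₀′(p) = 0 for all p ∈ (0,1). Then for every p ∈ (0,1): (λ₀′(p)·λ₁″(p) − λ₁′(p)·λ₀″(p)) / (λ₀′(p)·λ₁′(p)·(λ₁′(p) − λ₀′(p))) = 1 / ((1−p)·λ₀′(p)). -/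
open Set Filter Topology

/-!
Differentiating the first-order condition `p λ₁' + (1 - p) λ₀' = 0` gives
`p λ₁'' + (1 - p) λ₀'' = λ₀' - λ₁'`. Eliminating the second derivatives with these two relations,
the numerator `λ₀' λ₁'' - λ₁' λ₀''` equals `λ₀' (λ₀' - λ₁') / p`, so the ratio collapses to
`-1 / (p λ₁') = 1 / ((1 - p) λ₀')`.
-/

theorem deriv_first_order_condition {f g : ℝ → ℝ} {p : ℝ}
    (hf : DifferentiableAt ℝ f p) (hg : DifferentiableAt ℝ g p)
    (hfoc : ∀ᶠ x in 𝓝 p, x * g x + (1 - x) * f x = 0) :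
    p * deriv g p + (1 - p) * deriv f p = f p - g p := by
  have hcomb : HasDerivAt (fun x => x * g x + (1 - x) * f x)
      (1 * g p + p * deriv g p + ((0 - 1) * f p + (1 - p) * deriv f p)) p :=
    ((hasDerivAt_id p).mul hg.hasDerivAt).add
      (((hasDerivAt_const p 1).sub (hasDerivAt_id p)).mul hf.hasDerivAt)
  have hzero : HasDerivAt (fun x => x * g x + (1 - x) * f x) 0 p :=
    (hasDerivAt_const p 0).congr_of_eventuallyEq hfoc
  linarith [hcomb.unique hzero]

theorem curvature_ratio_eq_of_first_order_condition {p a b A B : ℝ}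
    (hp : p ≠ 0) (hp' : 1 - p ≠ 0) (ha : a ≠ 0)
    (hfoc : p * b + (1 - p) * a = 0) (hdfoc : p * B + (1 - p) * A = a - b) :
    (a * B - b * A) / (a * b * (b - a)) = 1 / ((1 - p) * a) := by
  have hb : b ≠ 0 := by
    rintro rfl
    exact mul_ne_zero hp' ha (by linarith)
  have hba : b - a ≠ 0 := by
    intro h
    exact ha (by linear_combination hfoc - p * h)
  have hnum : a * B - b * A = a * (a - b) / p := by
    rw [eq_div_iff hp]
    linear_combination a * hdfoc - A * hfoc
  rw [hnum, div_div, div_eq_div_iff (mul_ne_zero hp (mul_ne_zero (mul_ne_zero ha hb) hba))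
    (mul_ne_zero hp' ha)]
  linear_combination a * (a - b) * hfoc

theorem curvature_ratio_eq_general (l0 l1 : ℝ → ℝ)
    (hd0' : ∀ p ∈ Ioo (0:ℝ) 1, DifferentiableAt ℝ (deriv l0) p)
    (hd1' : ∀ p ∈ Ioo (0:ℝ) 1, DifferentiableAt ℝ (deriv l1) p)
    (hpos : ∀ p ∈ Ioo (0:ℝ) 1, 0 < deriv l0 p)
    (hfoc : ∀ p ∈ Ioo (0:ℝ) 1, p * deriv l1 p + (1 - p) * deriv l0 p = 0) :
    ∀ p ∈ Ioo (0:ℝ) 1,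
      (deriv l0 p * deriv (deriv l1) p - deriv l1 p * deriv (deriv l0) p) /
          (deriv l0 p * deriv l1 p * (deriv l1 p - deriv l0 p)) =
        1 / ((1 - p) * deriv l0 p) := by
  intro p hp
  have hfoc_near : ∀ᶠ x in 𝓝 p, x * deriv l1 x + (1 - x) * deriv l0 x = 0 :=
    eventually_of_mem (Ioo_mem_nhds hp.1 hp.2) hfoc
  exact curvature_ratio_eq_of_first_order_condition hp.1.ne' (sub_pos.2 hp.2).ne'
    (hpos p hp).ne' (hfoc p hp) (deriv_first_order_condition (hd0' p hp) (hd1' p hp) hfoc_near)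

/-- If `λ₀, λ₁` are twice differentiable on `(0,1)` with `λ₀' > 0` and satisfy the
first-order propriety condition `p·λ₁'(p) + (1-p)·λ₀'(p) = 0`, then the ratio
`k_λ(p)/k_ln(p)` of signed curvatures equals `1/((1-p)·λ₀'(p))` on `(0,1)`. -/
theorem curvature_ratio_eq (l0 l1 : ℝ → ℝ)
    (hd0 : ∀ p ∈ Ioo (0:ℝ) 1, DifferentiableAt ℝ l0 p)
    (hd1 : ∀ p ∈ Ioo (0:ℝ) 1, DifferentiableAt ℝ l1 p)
    (hd0' : ∀ p ∈ Ioo (0:ℝ) 1, DifferentiableAt ℝ (deriv l0) p)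
    (hd1' : ∀ p ∈ Ioo (0:ℝ) 1, DifferentiableAt ℝ (deriv l1) p)
    (hpos : ∀ p ∈ Ioo (0:ℝ) 1, 0 < deriv l0 p)
    (hfoc : ∀ p ∈ Ioo (0:ℝ) 1, p * deriv l1 p + (1 - p) * deriv l0 p = 0) :
    ∀ p ∈ Ioo (0:ℝ) 1,
      (deriv l0 p * deriv (deriv l1) p - deriv l1 p * deriv (deriv l0) p) /
          (deriv l0 p * deriv l1 p * (deriv l1 p - deriv l0 p)) =
        1 / ((1 - p) * deriv l0 p) :=
  curvature_ratio_eq_general l0 l1 hd0' hd1' hpos hfoc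
end

section
/- The Brier loss function is 2-mixable: the set {(u,v) ∈ [0,1]² : ∃p ∈ [0,1], u ≤ e^{−2p²} and v ≤ e^{−2(1−p)²}} is convex. -/
/-!
The upper boundary of the set is the curve `p ↦ (e^{-2p²}, e^{-2(1-p)²})`, whose normal at `p` is
`((1-p) e^{-2(1-p)²}, p e^{-2p²})`. With `d = q - p`, the claim that the curve point at `q` lies
below the tangent line at `p` becomes, after dividing by `e^{-2p²-2(1-p)²-2d²}`, Hoeffding's lemma
`(1-p) e^{-4pd} + p e^{4(1-p)d} ≤ e^{2d²}` for a centred Bernoulli variable. Conversely a point of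
the unit square below all these tangents lies below the curve, so the set is an intersection of
half-planes with the square, hence convex.
-/

open Set Real ProbabilityTheory MeasureTheory

lemma bernoulli_mgf_le {p : ℝ} (hp : p ∈ Icc (0:ℝ) 1) (t : ℝ) :
    (1 - p) * exp (-p * t) + p * exp ((1 - p) * t) ≤ exp (t ^ 2 / 8) := by
  let μ : Measure ℝ := Ber(1 - p, -p, ⟨p, hp⟩)
  have hsupp : ∀ᵐ x ∂μ, x ∈ Icc (-p) (1 - p) := by
    change μ (Icc (-p) (1 - p))ᶜ = 0
    rw [bernoulliMeasure_apply_of_notMem_of_notMem _ measurableSet_Icc.compl] <;> simp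
  have hmean : μ[id] = 0 := by
    simp only [μ, integral_bernoulliMeasure, id, smul_eq_mul]; ring
  have h := (hasSubgaussianMGF_of_mem_Icc_of_integral_eq_zero aemeasurable_id hsupp hmean).mgf_le t
  rw [show 1 - p - -p = 1 by ring] at h
  simp only [mgf, μ, integral_bernoulliMeasure, id, smul_eq_mul] at h
  norm_num at h
  calc (1 - p) * exp (-p * t) + p * exp ((1 - p) * t)
      = p * exp (t * (1 - p)) + (1 - p) * exp (-(t * p)) := by ring_nf
    _ ≤ exp (1 / 4 * t ^ 2 / 2) := h
    _ = exp (t ^ 2 / 8) := by ring_nf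

/-- The closed half-plane below the tangent line at parameter `p` to the curve
`p ↦ (e^{-2p²}, e^{-2(1-p)²})`. -/
def brierHalfPlane (p : ℝ) : Set (ℝ × ℝ) :=
  {x | (1 - p) * exp (-(2 * (1 - p) ^ 2)) * x.1 + p * exp (-(2 * p ^ 2)) * x.2 ≤
    exp (-(2 * p ^ 2)) * exp (-(2 * (1 - p) ^ 2))}

lemma convex_brierHalfPlane (p : ℝ) : Convex ℝ (brierHalfPlane p) :=
  convex_halfSpace_le ⟨fun x y => by simp only [Prod.fst_add, Prod.snd_add]; ring,
    fun c x => by simp only [Prod.smul_fst, Prod.smul_snd, smul_eq_mul]; ring⟩ _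

lemma mem_brierHalfPlane_of_le {p : ℝ} (hp : p ∈ Icc (0:ℝ) 1) {x y : ℝ × ℝ} (hxy : x ≤ y)
    (hy : y ∈ brierHalfPlane p) : x ∈ brierHalfPlane p := by
  simp only [brierHalfPlane, mem_ofPred_eq] at hy ⊢
  have hp₀ : 0 ≤ p := hp.1
  have hp₁ : 0 ≤ 1 - p := sub_nonneg.2 hp.2
  refine le_trans ?_ hy
  gcongr
  exacts [hxy.1, hxy.2]

lemma swap_mem_brierHalfPlane {p : ℝ} {x : ℝ × ℝ} :
    x.swap ∈ brierHalfPlane p ↔ x ∈ brierHalfPlane (1 - p) := by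
  simp only [brierHalfPlane, mem_ofPred_eq, Prod.fst_swap, Prod.snd_swap, sub_sub_cancel]
  rw [add_comm, mul_comm (exp _)]

lemma brierCurve_mem_brierHalfPlane {p : ℝ} (hp : p ∈ Icc (0:ℝ) 1) (q : ℝ) :
    (exp (-(2 * q ^ 2)), exp (-(2 * (1 - q) ^ 2))) ∈ brierHalfPlane p := by
  set c := exp (-(2 * (q - p) ^ 2) - 2 * p ^ 2 - 2 * (1 - p) ^ 2)
  show (1 - p) * exp (-(2 * (1 - p) ^ 2)) * exp (-(2 * q ^ 2)) +
    p * exp (-(2 * p ^ 2)) * exp (-(2 * (1 - q) ^ 2)) ≤ _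
  calc (1 - p) * exp (-(2 * (1 - p) ^ 2)) * exp (-(2 * q ^ 2)) +
        p * exp (-(2 * p ^ 2)) * exp (-(2 * (1 - q) ^ 2))
      = ((1 - p) * exp (-p * (4 * (q - p))) + p * exp ((1 - p) * (4 * (q - p)))) * c := by
        simp only [c, mul_assoc, add_mul, ← exp_add]
        ring_nf
    _ ≤ exp ((4 * (q - p)) ^ 2 / 8) * c :=
        mul_le_mul_of_nonneg_right (bernoulli_mgf_le hp _) (exp_pos _).le
    _ = exp (-(2 * p ^ 2)) * exp (-(2 * (1 - p) ^ 2)) := by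
        simp only [c, ← exp_add]
        ring_nf

lemma exists_of_forall_mem_brierHalfPlane_of_fst_lt_one {x : ℝ × ℝ} (h₁ : x.1 < 1)
    (h₂ : x.2 ≤ 1) (hx : ∀ p ∈ Icc (0:ℝ) 1, x ∈ brierHalfPlane p) :
    ∃ p ∈ Icc (0:ℝ) 1, x.1 ≤ exp (-(2 * p ^ 2)) ∧ x.2 ≤ exp (-(2 * (1 - p) ^ 2)) := by
  rcases lt_or_ge x.1 (exp (-2)) with hlt | hge
  · exact ⟨1, right_mem_Icc.2 zero_le_one, by norm_num [hlt.le], by norm_num [h₂]⟩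
  obtain ⟨p, hp, hpx⟩ : ∃ p ∈ Icc (0:ℝ) 1, exp (-(2 * p ^ 2)) = x.1 :=
    intermediate_value_Icc' zero_le_one (by fun_prop) ⟨by norm_num [hge], by norm_num [h₁.le]⟩
  have hp₀ : 0 < p := by
    refine hp.1.lt_of_ne ?_
    rintro rfl
    exact h₁.ne (by simpa using hpx.symm)
  refine ⟨p, hp, hpx.ge, ?_⟩
  have hpx' := hx p hp
  rw [brierHalfPlane, mem_ofPred_eq, ← hpx] at hpx'
  refine le_of_mul_le_mul_left ?_ (by positivity : 0 < p * exp (-(2 * p ^ 2)))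
  nlinarith

lemma exists_of_forall_mem_brierHalfPlane {x : ℝ × ℝ} (h₁ : x.1 ≤ 1) (h₂ : x.2 ≤ 1)
    (hx : ∀ p ∈ Icc (0:ℝ) 1, x ∈ brierHalfPlane p) :
    ∃ p ∈ Icc (0:ℝ) 1, x.1 ≤ exp (-(2 * p ^ 2)) ∧ x.2 ≤ exp (-(2 * (1 - p) ^ 2)) := by
  rcases h₁.lt_or_eq with h₁ | h₁
  · exact exists_of_forall_mem_brierHalfPlane_of_fst_lt_one h₁ h₂ hx
  rcases h₂.lt_or_eq with h₂ | h₂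
  · obtain ⟨p, ⟨hp₀, hp₁⟩, hp₂, hp₁'⟩ :=
      exists_of_forall_mem_brierHalfPlane_of_fst_lt_one (x := x.swap) h₂ h₁.le fun p hp =>
        swap_mem_brierHalfPlane.2 (hx (1 - p) ⟨sub_nonneg.2 hp.2, by linarith [hp.1]⟩)
    refine ⟨1 - p, ⟨sub_nonneg.2 hp₁, by linarith⟩, hp₁', ?_⟩
    rwa [sub_sub_cancel]
  · have h := hx (1 / 2) (by norm_num)
    norm_num [brierHalfPlane, h₁, h₂, ← exp_add] at h
    linarith [exp_lt_exp.2 (show (-1:ℝ) < -(1 / 2) by norm_num)]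

/-- The Brier loss function `λ₀(p) = p²`, `λ₁(p) = (1-p)²` is 2-mixable: the set
`{(u,v) ∈ [0,1]² : ∃ p ∈ [0,1], u ≤ e^{-2p²} and v ≤ e^{-2(1-p)²}}` is convex. -/
theorem brier_loss_two_mixable :
    Convex ℝ {x : ℝ × ℝ | x.1 ∈ Icc (0:ℝ) 1 ∧ x.2 ∈ Icc (0:ℝ) 1 ∧
      ∃ p ∈ Icc (0:ℝ) 1,
        x.1 ≤ Real.exp (-(2 * p ^ 2)) ∧ x.2 ≤ Real.exp (-(2 * (1 - p) ^ 2))} := by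
  convert ((convex_Icc 0 1).prod (convex_Icc 0 1)).inter
    (convex_iInter₂ fun p (_ : p ∈ Icc (0:ℝ) 1) => convex_brierHalfPlane p) using 1
  ext x
  simp only [mem_ofPred_eq, mem_inter_iff, mem_prod, mem_iInter₂]
  constructor
  · rintro ⟨h₁, h₂, q, -, hq⟩
    exact ⟨⟨h₁, h₂⟩, fun p hp =>
      mem_brierHalfPlane_of_le hp hq (brierCurve_mem_brierHalfPlane hp q)⟩
  · rintro ⟨⟨h₁, h₂⟩, hx⟩
    exact ⟨h₁, h₂, exists_of_forall_mem_brierHalfPlane h₁.2 h₂.2 hx⟩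
end

section
/- For every p ∈ (0,1), the ratio of the signed curvature of the spherical loss prediction curve to that of the log loss prediction curve satisfies k_spher(p)/k_ln(p) = (p² + (1−p)²)^{3/2} / (p(1−p)) ≥ √2, with equality if and only if p = 1/2; hence the infimum over p ∈ (0,1) of this ratio, which is the mixability constant of the spherical loss function, equals √2. -/
open Set

lemma spher_aux (p : ℝ) (hp : p ∈ Ioo (0:ℝ) 1) :
    1 / (p * (1 - p) / (p ^ 2 + (1 - p) ^ 2) ^ ((3:ℝ)/2)) =
      (p ^ 2 + (1 - p) ^ 2) ^ ((3:ℝ)/2) / (p * (1 - p)) ∧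
    Real.sqrt 2 ≤ (p ^ 2 + (1 - p) ^ 2) ^ ((3:ℝ)/2) / (p * (1 - p)) ∧
    ((p ^ 2 + (1 - p) ^ 2) ^ ((3:ℝ)/2) / (p * (1 - p)) = Real.sqrt 2 ↔ p = 1/2) := by
  obtain ⟨hp0, hp1⟩ := hp
  have hs : 0 < p * (1 - p) := by nlinarith
  have hx : 0 < p ^ 2 + (1 - p) ^ 2 := by nlinarith
  have hr : 0 < (p ^ 2 + (1 - p) ^ 2) ^ ((3:ℝ)/2) := Real.rpow_pos_of_pos hx _
  set A := (p ^ 2 + (1 - p) ^ 2) ^ ((3:ℝ)/2) / (p * (1 - p)) with hAdef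
  have hA : 0 < A := div_pos hr hs
  have hsq : ((p ^ 2 + (1 - p) ^ 2) ^ ((3:ℝ)/2)) ^ 2 = (p ^ 2 + (1 - p) ^ 2) ^ 3 := by
    rw [← Real.rpow_natCast ((p ^ 2 + (1 - p) ^ 2) ^ ((3:ℝ)/2)) 2,
      ← Real.rpow_mul hx.le, ← Real.rpow_natCast (p ^ 2 + (1 - p) ^ 2) 3]
    norm_num
  have hA2eq : A ^ 2 = (p ^ 2 + (1 - p) ^ 2) ^ 3 / (p * (1 - p)) ^ 2 := by
    rw [hAdef, div_pow, hsq]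
  have hfactor : (p ^ 2 + (1 - p) ^ 2) ^ 3 - 2 * (p * (1 - p)) ^ 2
      = (2 * p - 1) ^ 2 * (2 * (p * (1 - p)) ^ 2 - 2 * (p * (1 - p)) + 1) := by ring
  have hpos2 : 0 < 2 * (p * (1 - p)) ^ 2 - 2 * (p * (1 - p)) + 1 := by
    nlinarith [sq_nonneg (2 * (p * (1 - p)) - 1)]
  have hge : 2 * (p * (1 - p)) ^ 2 ≤ (p ^ 2 + (1 - p) ^ 2) ^ 3 := by
    nlinarith [mul_nonneg (sq_nonneg (2 * p - 1)) hpos2.le]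
  have hA2 : 2 ≤ A ^ 2 := by
    rw [hA2eq, le_div_iff₀ (by positivity)]
    linarith
  refine ⟨one_div_div _ _, ?_, ?_⟩
  · have := Real.sqrt_le_sqrt hA2
    rwa [Real.sqrt_sq hA.le] at this
  · constructor
    · intro h
      have h2 : A ^ 2 = 2 := by rw [h, Real.sq_sqrt]; norm_num
      have h3 : (p ^ 2 + (1 - p) ^ 2) ^ 3 = 2 * (p * (1 - p)) ^ 2 := by
        rw [hA2eq] at h2
        field_simp at h2
        linarith
      have h4 : (2 * p - 1) ^ 2 * (2 * (p * (1 - p)) ^ 2 - 2 * (p * (1 - p)) + 1) = 0 := by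
        rw [← hfactor, h3]; ring
      have h5 : (2 * p - 1) ^ 2 = 0 := by
        rcases mul_eq_zero.mp h4 with h | h
        · exact h
        · linarith
      have : 2 * p - 1 = 0 := by
        exact pow_eq_zero_iff (by norm_num) |>.mp h5
      linarith
    · intro h
      subst h
      have h2 : A ^ 2 = 2 := by rw [hA2eq]; norm_num
      rw [← Real.sqrt_sq hA.le, h2]

/-- For every `p ∈ (0,1)`, `k_spher(p)/k_ln(p) = (p² + (1-p)²)^{3/2}/(p(1-p)) ≥ √2`
with equality iff `p = 1/2`; the infimum of this ratio over `(0,1)`, i.e. the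
mixability constant of the spherical loss function, equals `√2`. -/
theorem spherical_mixability_constant :
    (∀ p ∈ Ioo (0:ℝ) 1,
      1 / (p * (1 - p) / (p ^ 2 + (1 - p) ^ 2) ^ ((3:ℝ)/2)) =
        (p ^ 2 + (1 - p) ^ 2) ^ ((3:ℝ)/2) / (p * (1 - p)) ∧
      Real.sqrt 2 ≤ (p ^ 2 + (1 - p) ^ 2) ^ ((3:ℝ)/2) / (p * (1 - p)) ∧
      ((p ^ 2 + (1 - p) ^ 2) ^ ((3:ℝ)/2) / (p * (1 - p)) = Real.sqrt 2 ↔ p = 1/2)) ∧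
    sInf ((fun p : ℝ => (p ^ 2 + (1 - p) ^ 2) ^ ((3:ℝ)/2) / (p * (1 - p))) '' Ioo 0 1) =
      Real.sqrt 2 := by
  refine ⟨spher_aux, ?_⟩
  apply IsLeast.csInf_eq
  constructor
  · refine ⟨1/2, by norm_num, ?_⟩
    exact ((spher_aux (1/2) (by norm_num)).2.2).mpr rfl
  · rintro y ⟨p, hp, rfl⟩
    exact (spher_aux p hp).2.1
end

section
/- For every p ∈ (0,1), the ratio of the signed curvature of the Brier loss prediction curve to that of the log loss prediction curve satisfies k_Brier(p)/k_ln(p) = 1/(2p(1−p)) ≥ 2, with equality if and only if p = 1/2; hence the infimum over p ∈ (0,1) of this ratio, which is the mixability constant of the Brier loss function, equals 2. -/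
/-!
The powers of `p² + (1 - p)²` cancel in the ratio of curvatures, leaving `1 / (2p(1 - p))`.
Since `1/2 - 2p(1 - p) = 2(p - 1/2)²`, the denominator is at most `1/2` with equality only at
`p = 1/2`, so the ratio is at least `2` and attains `2` exactly there.
-/

open Set

lemma mul_rpow_neg_div_div_rpow {q : ℝ} (hq : 0 < q) (a b s : ℝ) :
    a * q ^ (-s) / (b / q ^ s) = a / b := by
  have hqs : q ^ s ≠ 0 := (Real.rpow_pos_of_pos hq s).ne'
  rw [Real.rpow_neg hq.le, div_div_eq_mul_div, mul_assoc, inv_mul_cancel₀ hqs, mul_one]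

lemma half_sub_two_mul_mul_one_sub (p : ℝ) : 1 / 2 - 2 * p * (1 - p) = 2 * (p - 1 / 2) ^ 2 := by
  ring

lemma two_mul_mul_one_sub_le_half (p : ℝ) : 2 * p * (1 - p) ≤ 1 / 2 := by
  linarith [half_sub_two_mul_mul_one_sub p, sq_nonneg (p - 1 / 2)]

lemma two_le_one_div_two_mul_mul_one_sub {p : ℝ} (hp : p ∈ Ioo (0 : ℝ) 1) :
    2 ≤ 1 / (2 * p * (1 - p)) := by
  have hpos : 0 < 2 * p * (1 - p) := by nlinarith [hp.1, hp.2]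
  rw [le_one_div two_pos hpos]
  exact two_mul_mul_one_sub_le_half p

lemma one_div_two_mul_mul_one_sub_eq_two_iff (p : ℝ) :
    1 / (2 * p * (1 - p)) = 2 ↔ p = 1 / 2 := by
  rw [one_div, inv_eq_iff_eq_inv]
  constructor
  · intro h
    have hsq : 2 * (p - 1 / 2) ^ 2 = 0 := by
      rw [← half_sub_two_mul_mul_one_sub, h]; norm_num
    nlinarith [sq_nonneg (p - 1 / 2)]
  · rintro rfl
    norm_num

lemma isLeast_one_div_two_mul_mul_one_sub_image_Ioo :
    IsLeast ((fun p : ℝ => 1 / (2 * p * (1 - p))) '' Ioo 0 1) 2 := by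
  refine ⟨⟨1 / 2, by norm_num, by norm_num⟩, ?_⟩
  rintro _ ⟨p, hp, rfl⟩
  exact two_le_one_div_two_mul_mul_one_sub hp

/-- For every `p ∈ (0,1)`, `k_Brier(p)/k_ln(p) = 1/(2p(1-p)) ≥ 2` with equality iff
`p = 1/2`; the infimum of this ratio over `(0,1)`, i.e. the mixability constant of the
Brier loss function, equals `2`. -/
theorem brier_mixability_constant :
    (∀ p ∈ Ioo (0:ℝ) 1,
      ((1/2) * (p ^ 2 + (1 - p) ^ 2) ^ (-(3:ℝ)/2)) /
          (p * (1 - p) / (p ^ 2 + (1 - p) ^ 2) ^ ((3:ℝ)/2)) =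
        1 / (2 * p * (1 - p)) ∧
      2 ≤ 1 / (2 * p * (1 - p)) ∧
      (1 / (2 * p * (1 - p)) = 2 ↔ p = 1/2)) ∧
    sInf ((fun p : ℝ => 1 / (2 * p * (1 - p))) '' Ioo 0 1) = 2 := by
  refine ⟨fun p hp => ⟨?_, two_le_one_div_two_mul_mul_one_sub hp,
    one_div_two_mul_mul_one_sub_eq_two_iff p⟩,
    isLeast_one_div_two_mul_mul_one_sub_image_Ioo.csInf_eq⟩
  have hq : 0 < p ^ 2 + (1 - p) ^ 2 := by nlinarith [hp.1, hp.2]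
  rw [neg_div, mul_rpow_neg_div_div_rpow hq, div_div, mul_assoc]
end
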